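/- Let K ∈ ℕ (K ≥ 1) and let N_{K,ℓ} = |{Y ⊆ [1,ℓ] : ℓ ∈ Y, cl(Y) = K}| + |{Y ⊆ [1,ℓ] : cl(Y) ≤ K−1}|. If ℓ ≥ 2K and L ≥ ℓ + N_{K,ℓ}, then there exists a normalized ψ₀ : {subsets of [1,L]} → ℂ with ψ₀(X) = 0 whenever cl(X) > K, such that S(ρ₁(ψ₀)) = log(N_{K,ℓ} + 1). -/

import Mathlib

/-- Number of connected components (clusters) of a finite set of integers. -/
def clZ (Y : Finset ℤ) : ℕ := (Y.filter (fun y => y - 1 ∉ Y)).card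

/-- Configurations: subsets of the interval `[1,L]` of `ℤ`. -/
abbrev Cfg (L : ℕ) := {X : Finset ℤ // X ⊆ Finset.Icc 1 (L:ℤ)}

noncomputable instance (L : ℕ) : Fintype (Cfg L) :=
  Fintype.subtype (Finset.Icc (1:ℤ) (L:ℤ)).powerset (fun _ => Finset.mem_powerset)

/-- Union of a configuration in `[1,ℓ]` with a configuration in `[ℓ+1,L]`, viewed in `[1,L]`
(the intersection with `[1,L]` is vacuous when `ℓ ≤ L`). -/
noncomputable def joinUp (L ℓ : ℕ) (Y : Cfg ℓ) (Z : Finset ℤ) : Cfg L :=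
  ⟨(Y.1 ∪ Z) ∩ Finset.Icc 1 (L:ℤ), Finset.inter_subset_right⟩

/-- The reduced density matrix `ρ₁(ψ)` of a state `ψ` on `[1,L]`, reduced to `[1,ℓ]`:
`ρ₁(ψ)_{Y,Y'} = ∑_{Z ⊆ [ℓ+1,L]} ψ(Y ∪ Z) conj(ψ(Y' ∪ Z))`. -/
noncomputable def rho1 (L ℓ : ℕ) (ψ : Cfg L → ℂ) : Matrix (Cfg ℓ) (Cfg ℓ) ℂ :=
  fun Y Y' => ∑ Z ∈ (Finset.Icc ((ℓ:ℤ)+1) (L:ℤ)).powerset,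
    ψ (joinUp L ℓ Y Z) * (starRingEnd ℂ) (ψ (joinUp L ℓ Y' Z))

/-- Von Neumann entropy `-∑ λᵢ log λᵢ` of (the eigenvalues of) a Hermitian matrix. -/
noncomputable def vnEntropy {n : Type*} [Fintype n] [DecidableEq n] (M : Matrix n n ℂ) : ℝ :=
  if h : M.IsHermitian then -∑ i, (h.eigenvalues i) * Real.log (h.eigenvalues i) else 0

/-- `N_{K,ℓ}`: the number of subsets of `[1,ℓ]` which contain `ℓ` and have exactly `K`
clusters, plus the number of subsets of `[1,ℓ]` with at most `K−1` clusters. -/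
noncomputable def NKl (K ℓ : ℕ) : ℕ :=
  ((Finset.Icc (1:ℤ) (ℓ:ℤ)).powerset.filter (fun Y => (ℓ:ℤ) ∈ Y ∧ clZ Y = K)).card +
  ((Finset.Icc (1:ℤ) (ℓ:ℤ)).powerset.filter (fun Y => clZ Y ≤ K - 1)).card

lemma entropy_diag {n : Type*} [Fintype n] [DecidableEq n] (d : n → ℝ) (a : ℝ) (ha : 0 < a)
    (hd : ∀ i, d i = 0 ∨ d i = a) (hsum : ∑ i, d i = 1) :
    vnEntropy (Matrix.diagonal (fun i => (d i : ℂ))) = Real.log a⁻¹ := by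
  set M : Matrix n n ℂ := Matrix.diagonal (fun i => (d i : ℂ)) with hM
  have hH : M.IsHermitian := by
    apply Matrix.isHermitian_diagonal_of_self_adjoint
    funext i
    simp [Pi.star_apply, RCLike.star_def, Complex.conj_ofReal]
  -- M * M = a • M
  have hMM : M * M = (a : ℂ) • M := by
    rw [hM, Matrix.diagonal_mul_diagonal]
    ext i j
    simp only [Matrix.smul_apply, Matrix.diagonal_apply, smul_eq_mul]
    by_cases hij : i = j
    · subst hij
      simp only [if_pos rfl]
      rcases hd i with h | h <;> rw [h] <;> push_cast <;> ring
    · simp [hij]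
  -- eigenvalues are 0 or a
  have heig : ∀ i, hH.eigenvalues i = 0 ∨ hH.eigenvalues i = a := by
    intro i
    set v : n → ℂ := ⇑(hH.eigenvectorBasis i) with hvdef
    set lam : ℝ := hH.eigenvalues i with hlam
    have hv : Matrix.mulVec M v = (lam : ℂ) • v := by
      have h0 := hH.mulVec_eigenvectorBasis i
      rw [hvdef, h0]
      funext j
      show (lam : ℝ) • ((⇑(hH.eigenvectorBasis i) : n → ℂ) j) = (lam : ℂ) * _
      rw [Complex.real_smul]
    have hvne : v ≠ 0 := by
      have h0 := hH.eigenvectorBasis.orthonormal.ne_zero i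
      intro hc
      exact h0 (by ext j; exact congrFun hc j)
    have h2 : Matrix.mulVec M (Matrix.mulVec M v) = ((lam : ℂ) * lam) • v := by
      rw [hv, Matrix.mulVec_smul, hv, smul_smul]
    have h3 : Matrix.mulVec M (Matrix.mulVec M v) = ((a : ℂ) * lam) • v := by
      rw [Matrix.mulVec_mulVec, hMM, Matrix.smul_mulVec, hv, smul_smul]
    have h4 : (((lam : ℂ) * lam) - (a : ℂ) * lam) • v = 0 := by
      rw [sub_smul, ← h2, ← h3, sub_self]
    rcases smul_eq_zero.mp h4 with h | h
    · have h5 : (lam * lam - a * lam : ℝ) = 0 := by exact_mod_cast h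
      have h6 : lam * (lam - a) = 0 := by ring_nf; linarith
      rcases mul_eq_zero.mp h6 with h7 | h7
      · exact Or.inl h7
      · exact Or.inr (by linarith)
    · exact absurd h hvne
  -- trace = sum of eigenvalues
  have htr : ∑ i, hH.eigenvalues i = 1 := by
    have h1 : M.trace = ∑ i, (hH.eigenvalues i : ℂ) := by
      exact hH.trace_eq_sum_eigenvalues
    have h2 : M.trace = (1 : ℂ) := by
      rw [hM, Matrix.trace_diagonal, ← Complex.ofReal_sum, hsum, Complex.ofReal_one]
    rw [h2] at h1
    have := congrArg Complex.re h1
    simpa using this.symm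
  rw [vnEntropy, dif_pos hH]
  have hterm : ∀ i, hH.eigenvalues i * Real.log (hH.eigenvalues i)
      = hH.eigenvalues i * Real.log a := by
    intro i
    rcases heig i with h | h <;> simp [h]
  rw [Finset.sum_congr rfl (fun i _ => hterm i), ← Finset.sum_mul, htr, one_mul, Real.log_inv]

lemma joinUp_val {L ℓ : ℕ} (hℓL : ℓ ≤ L) (Y : Cfg ℓ) {Z : Finset ℤ}
    (hZ : Z ⊆ Finset.Icc ((ℓ:ℤ)+1) (L:ℤ)) : (joinUp L ℓ Y Z).1 = Y.1 ∪ Z := by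
  apply Finset.inter_eq_left.mpr
  apply Finset.union_subset
  · exact Y.2.trans (Finset.Icc_subset_Icc le_rfl (by exact_mod_cast hℓL))
  · exact hZ.trans (Finset.Icc_subset_Icc (by omega) le_rfl)

lemma joinUp_left {L ℓ : ℕ} (hℓL : ℓ ≤ L) (Y : Cfg ℓ) {Z : Finset ℤ}
    (hZ : Z ⊆ Finset.Icc ((ℓ:ℤ)+1) (L:ℤ)) :
    (joinUp L ℓ Y Z).1 ∩ Finset.Icc 1 (ℓ:ℤ) = Y.1 := by
  rw [joinUp_val hℓL Y hZ]
  ext x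
  simp only [Finset.mem_inter, Finset.mem_union, Finset.mem_Icc]
  constructor
  · rintro ⟨hx | hx, hx2⟩
    · exact hx
    · have := Finset.mem_Icc.mp (hZ hx); omega
  · intro hx
    exact ⟨Or.inl hx, Finset.mem_Icc.mp (Y.2 hx)⟩

lemma joinUp_right {L ℓ : ℕ} (hℓL : ℓ ≤ L) (Y : Cfg ℓ) {Z : Finset ℤ}
    (hZ : Z ⊆ Finset.Icc ((ℓ:ℤ)+1) (L:ℤ)) :
    (joinUp L ℓ Y Z).1 ∩ Finset.Icc ((ℓ:ℤ)+1) (L:ℤ) = Z := by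
  rw [joinUp_val hℓL Y hZ]
  ext x
  simp only [Finset.mem_inter, Finset.mem_union, Finset.mem_Icc]
  constructor
  · rintro ⟨hx | hx, hx2⟩
    · have := Finset.mem_Icc.mp (Y.2 hx); omega
    · exact hx
  · intro hx
    exact ⟨Or.inr hx, Finset.mem_Icc.mp (hZ hx)⟩

lemma joinUp_inj {L ℓ : ℕ} (hℓL : ℓ ≤ L) {Y Y' : Cfg ℓ} {Z Z' : Finset ℤ}
    (hZ : Z ⊆ Finset.Icc ((ℓ:ℤ)+1) (L:ℤ)) (hZ' : Z' ⊆ Finset.Icc ((ℓ:ℤ)+1) (L:ℤ))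
    (h : joinUp L ℓ Y Z = joinUp L ℓ Y' Z') : Y = Y' ∧ Z = Z' := by
  have h1 : (joinUp L ℓ Y Z).1 = (joinUp L ℓ Y' Z').1 := by rw [h]
  constructor
  · apply Subtype.ext
    rw [← joinUp_left hℓL Y hZ, ← joinUp_left hℓL Y' hZ', h1]
  · rw [← joinUp_right hℓL Y hZ, ← joinUp_right hℓL Y' hZ', h1]

lemma main_aux (ℓ L : ℕ) (hℓL : ℓ ≤ L) (P : Finset (Cfg ℓ)) (hP : P.Nonempty)
    (zfun : Cfg ℓ → Finset ℤ)
    (hz : ∀ Y ∈ P, zfun Y ⊆ Finset.Icc ((ℓ:ℤ)+1) (L:ℤ))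
    (hinj : ∀ Y ∈ P, ∀ Y' ∈ P, zfun Y = zfun Y' → Y = Y') :
    ∃ ψ₀ : Cfg L → ℂ,
      (∑ X : Cfg L, ‖ψ₀ X‖^2) = 1 ∧
      (∀ X : Cfg L, ψ₀ X ≠ 0 → ∃ Y ∈ P, X.1 = Y.1 ∪ zfun Y) ∧
      vnEntropy (rho1 L ℓ ψ₀) = Real.log (P.card : ℝ) := by
  classical
  set m : ℕ := P.card with hm
  have hm0 : 0 < m := Finset.card_pos.mpr hP
  set c : ℝ := (Real.sqrt m)⁻¹ with hc
  have hc0 : 0 < c := by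
    rw [hc]
    apply inv_pos.mpr
    apply Real.sqrt_pos.mpr
    exact_mod_cast hm0
  have hcc : c * c = (m : ℝ)⁻¹ := by
    rw [hc, ← mul_inv, Real.mul_self_sqrt (by positivity)]
  set f : Cfg ℓ → Cfg L := fun Y => joinUp L ℓ Y (zfun Y) with hf
  have hfinj : ∀ Y ∈ P, ∀ Y' ∈ P, f Y = f Y' → Y = Y' := by
    intro Y hY Y' hY' h
    obtain ⟨h1, h2⟩ := joinUp_inj hℓL (hz Y hY) (hz Y' hY') h
    exact h1
  set ψ₀ : Cfg L → ℂ := fun X => (c : ℂ) * ∑ Y ∈ P, if X = f Y then 1 else 0 with hψ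
  -- evaluation on joins
  have heval : ∀ (Y : Cfg ℓ) (Z : Finset ℤ), Z ⊆ Finset.Icc ((ℓ:ℤ)+1) (L:ℤ) →
      ψ₀ (joinUp L ℓ Y Z) = if Y ∈ P ∧ Z = zfun Y then (c : ℂ) else 0 := by
    intro Y Z hZ
    rw [hψ]
    simp only
    have hterm : ∀ W ∈ P, (if joinUp L ℓ Y Z = f W then (1:ℂ) else 0)
        = if W = Y then (if Z = zfun Y then (1:ℂ) else 0) else 0 := by
      intro W hW
      by_cases hWY : W = Y
      · subst hWY
        by_cases hZW : Z = zfun W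
        · subst hZW; simp [hf]
        · rw [if_pos rfl, if_neg hZW, if_neg]
          intro hcon
          exact hZW (joinUp_inj hℓL hZ (hz W hW) hcon).2
      · rw [if_neg hWY, if_neg]
        intro hcon
        exact hWY ((joinUp_inj hℓL (hz W hW) hZ hcon.symm).1)
    rw [Finset.sum_congr rfl hterm, Finset.sum_ite_eq' P Y
      (fun _ => if Z = zfun Y then (1:ℂ) else 0)]
    by_cases hYP : Y ∈ P <;> by_cases hZY : Z = zfun Y <;>
      simp [hYP, hZY]
  -- values: indicator of image
  have hval : ∀ X : Cfg L, ψ₀ X = if X ∈ P.image f then (c : ℂ) else 0 := by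
    intro X
    by_cases hX : X ∈ P.image f
    · obtain ⟨Y₀, hY₀, hXY₀⟩ := Finset.mem_image.mp hX
      rw [hψ]
      simp only
      rw [Finset.sum_eq_single_of_mem Y₀ hY₀ (fun W hW hne => by
        rw [if_neg]
        intro hcon
        exact hne (hfinj W hW Y₀ hY₀ (by rw [← hcon, hXY₀]))), if_pos hXY₀.symm, if_pos hX,
        mul_one]
    · rw [hψ, if_neg hX]
      simp only
      rw [Finset.sum_eq_zero, mul_zero]
      intro W hW
      rw [if_neg]
      intro hcon
      exact hX (Finset.mem_image.mpr ⟨W, hW, hcon.symm⟩)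
  refine ⟨ψ₀, ?_, ?_, ?_⟩
  · -- normalization
    have himg : (P.image f).card = m := Finset.card_image_of_injOn hfinj
    calc ∑ X : Cfg L, ‖ψ₀ X‖^2 = ∑ X : Cfg L, (if X ∈ P.image f then c^2 else 0) := by
          apply Finset.sum_congr rfl
          intro X _
          rw [hval X]
          by_cases hX : X ∈ P.image f <;> simp [hX, abs_of_pos hc0, sq_abs]
      _ = (P.image f).card • (c^2) := by
          rw [Finset.sum_ite_mem, Finset.univ_inter, Finset.sum_const]
      _ = 1 := by
          rw [himg, nsmul_eq_mul, sq, hcc]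
          field_simp
  · -- support
    intro X hX
    rw [hval X] at hX
    by_cases h : X ∈ P.image f
    · obtain ⟨Y, hY, hXY⟩ := Finset.mem_image.mp h
      exact ⟨Y, hY, by rw [← hXY, hf]; exact joinUp_val hℓL Y (hz Y hY)⟩
    · rw [if_neg h] at hX
      exact absurd rfl hX
  · -- entropy
    have hrho : rho1 L ℓ ψ₀ = Matrix.diagonal
        (fun Y => ((if Y ∈ P then (m:ℝ)⁻¹ else 0 : ℝ) : ℂ)) := by
      funext Y Y'
      rw [rho1]
      have hterm : ∀ Z ∈ (Finset.Icc ((ℓ:ℤ)+1) (L:ℤ)).powerset,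
          ψ₀ (joinUp L ℓ Y Z) * (starRingEnd ℂ) (ψ₀ (joinUp L ℓ Y' Z))
          = if Z = zfun Y then
              (if Y ∈ P ∧ Y' ∈ P ∧ zfun Y = zfun Y' then ((c:ℂ) * c) else 0) else 0 := by
        intro Z hZ
        have hZ' := Finset.mem_powerset.mp hZ
        rw [heval Y Z hZ', heval Y' Z hZ']
        by_cases h1 : Z = zfun Y
        · subst h1
          rw [if_pos rfl]
          by_cases h2 : Y ∈ P <;> by_cases h3 : Y' ∈ P <;>
            by_cases h4 : zfun Y = zfun Y' <;>
            simp [h2, h3, h4, apply_ite (starRingEnd ℂ), Complex.conj_ofReal]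
        · rw [if_neg h1, if_neg (fun hcon => h1 hcon.2), zero_mul]
      rw [Finset.sum_congr rfl hterm,
        Finset.sum_ite_eq' ((Finset.Icc ((ℓ:ℤ)+1) (L:ℤ)).powerset) (zfun Y)
          (fun _ => if Y ∈ P ∧ Y' ∈ P ∧ zfun Y = zfun Y' then ((c:ℂ) * c) else 0)]
      rw [Matrix.diagonal_apply]
      by_cases hYP : Y ∈ P
      · rw [if_pos (Finset.mem_powerset.mpr (hz Y hYP))]
        by_cases hYY' : Y = Y'
        · subst hYY'
          rw [if_pos ⟨hYP, hYP, rfl⟩, if_pos rfl, if_pos hYP]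
          rw [← hcc]
          push_cast
          ring
        · rw [if_neg, if_neg hYY']
          rintro ⟨_, hY'P, hzz⟩
          exact hYY' (hinj Y hYP Y' hY'P hzz)
      · rw [if_neg (fun (h : Y ∈ P ∧ Y' ∈ P ∧ zfun Y = zfun Y') => hYP h.1)]
        by_cases hYY' : Y = Y'
        · subst hYY'
          simp [hYP]
        · simp [hYY']
    rw [hrho, entropy_diag (fun Y => if Y ∈ P then (m:ℝ)⁻¹ else 0) ((m:ℝ)⁻¹)
      (by positivity) (fun i => by by_cases h : i ∈ P <;> simp [h])
      (by
        rw [Finset.sum_ite_mem, Finset.univ_inter, Finset.sum_const, nsmul_eq_mul, ← hm]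
        field_simp)]
    rw [inv_inv]

lemma clZ_union (ℓ : ℕ) (Y : Finset ℤ) (hY : Y ⊆ Finset.Icc 1 (ℓ:ℤ)) (j : ℕ) (hj : 1 ≤ j) :
    clZ (Y ∪ Finset.Icc ((ℓ:ℤ)+1) ((ℓ:ℤ)+(j:ℤ))) = clZ Y + (if (ℓ:ℤ) ∈ Y then 0 else 1) := by
  set Z := Finset.Icc ((ℓ:ℤ)+1) ((ℓ:ℤ)+(j:ℤ)) with hZ
  have hmemZ : ∀ x, x ∈ Z ↔ (ℓ:ℤ)+1 ≤ x ∧ x ≤ (ℓ:ℤ)+(j:ℤ) := fun x => Finset.mem_Icc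
  have hmemY : ∀ x, x ∈ Y → 1 ≤ x ∧ x ≤ (ℓ:ℤ) := fun x hx => Finset.mem_Icc.mp (hY hx)
  rw [clZ, Finset.filter_union, Finset.card_union_of_disjoint]
  · have h1 : Y.filter (fun y => y - 1 ∉ Y ∪ Z) = Y.filter (fun y => y - 1 ∉ Y) := by
      apply Finset.filter_congr
      intro y hy
      have h2 := hmemY y hy
      simp only [Finset.mem_union, not_or, eq_iff_iff]
      constructor
      · exact fun h => h.1
      · intro h
        refine ⟨h, fun hc => ?_⟩
        have := (hmemZ _).mp hc
        omega
    have h2 : Z.filter (fun y => y - 1 ∉ Y ∪ Z) = if (ℓ:ℤ) ∈ Y then ∅ else {(ℓ:ℤ)+1} := by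
      ext x
      by_cases hl : (ℓ:ℤ) ∈ Y <;>
        simp only [hl, if_true, if_false, Finset.notMem_empty, Finset.mem_singleton,
          Finset.mem_filter, Finset.mem_union, not_or, hmemZ, iff_false]
      · rintro ⟨⟨hx1, hx2⟩, hx3, hx4⟩
        by_cases hx : x = (ℓ:ℤ)+1
        · exact hx3 (by rw [hx]; simpa using hl)
        · exact hx4 ⟨by omega, by omega⟩
      · constructor
        · rintro ⟨⟨hx1, hx2⟩, hx3, hx4⟩
          by_cases hx : x = (ℓ:ℤ)+1
          · exact hx
          · exact absurd (⟨by omega, by omega⟩ : (ℓ:ℤ)+1 ≤ x - 1 ∧ x - 1 ≤ (ℓ:ℤ)+(j:ℤ)) hx4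
        · intro hx
          subst hx
          refine ⟨⟨le_refl _, by omega⟩, by simpa using hl, fun hc => ?_⟩
          omega
    rw [h1, h2, ← clZ]
    by_cases hl : (ℓ:ℤ) ∈ Y <;> simp [hl]
  · apply Finset.disjoint_filter_filter
    rw [Finset.disjoint_left]
    intro x hx hc
    have h1 := hmemY x hx
    have h2 := (hmemZ x).mp hc
    omega

def Ystar (K : ℕ) : Finset ℤ := (Finset.range K).image (fun (i : ℕ) => 2*(i:ℤ)+1)

lemma mem_Ystar {K : ℕ} {x : ℤ} : x ∈ Ystar K ↔ ∃ i : ℕ, i < K ∧ x = 2*(i:ℤ)+1 := by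
  simp only [Ystar, Finset.mem_image, Finset.mem_range]
  constructor
  · rintro ⟨i, hi, rfl⟩; exact ⟨i, hi, rfl⟩
  · rintro ⟨i, hi, rfl⟩; exact ⟨i, hi, rfl⟩

lemma clZ_Ystar (K : ℕ) : clZ (Ystar K) = K := by
  rw [clZ]
  have h1 : (Ystar K).filter (fun y => y - 1 ∉ Ystar K) = Ystar K := by
    apply Finset.filter_true_of_mem
    intro y hy hc
    obtain ⟨i, hi, rfl⟩ := mem_Ystar.mp hy
    obtain ⟨i', hi', he⟩ := mem_Ystar.mp hc
    omega
  rw [h1, Ystar, Finset.card_image_of_injective _ (fun a b hab => by omega),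
    Finset.card_range]

lemma Ystar_subset {K ℓ : ℕ} (hK : 1 ≤ K) (hℓ : 2*K ≤ ℓ) :
    Ystar K ⊆ Finset.Icc 1 (ℓ:ℤ) := by
  intro x hx
  obtain ⟨i, hi, rfl⟩ := mem_Ystar.mp hx
  rw [Finset.mem_Icc]
  omega

lemma Ystar_not_mem {K ℓ : ℕ} (hℓ : 2*K ≤ ℓ) : (ℓ:ℤ) ∉ Ystar K := by
  intro hc
  obtain ⟨i, hi, he⟩ := mem_Ystar.mp hc
  omega

/-- for `ℓ ≥ 2K` and `L ≥ ℓ + N_{K,ℓ}` there is a normalized state supported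
on configurations with at most `K` clusters whose entanglement entropy equals
`log(N_{K,ℓ} + 1)`. -/
theorem ising_entropy_saturation
    (K : ℕ) (hK : 1 ≤ K) (ℓ L : ℕ) (h1 : 1 ≤ ℓ) (h2 : ℓ < L)
    (hℓ : 2*K ≤ ℓ) (hL : ℓ + NKl K ℓ ≤ L) :
    ∃ ψ₀ : Cfg L → ℂ,
      (∑ X : Cfg L, ‖ψ₀ X‖^2) = 1 ∧
      (∀ X : Cfg L, K < clZ X.1 → ψ₀ X = 0) ∧
      vnEntropy (rho1 L ℓ ψ₀) = Real.log ((NKl K ℓ : ℝ) + 1) := by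
  classical
  set A := (Finset.Icc (1:ℤ) (ℓ:ℤ)).powerset.filter (fun Y => (ℓ:ℤ) ∈ Y ∧ clZ Y = K) with hA
  set B := (Finset.Icc (1:ℤ) (ℓ:ℤ)).powerset.filter (fun Y => clZ Y ≤ K - 1) with hB
  have hNKl : NKl K ℓ = A.card + B.card := rfl
  have hsub : Ystar K ⊆ Finset.Icc 1 (ℓ:ℤ) := Ystar_subset hK hℓ
  set G : Finset (Finset ℤ) := (A ∪ B) ∪ {Ystar K} with hG
  have hAB : Disjoint A B := by
    rw [Finset.disjoint_left]
    intro Y hYA hYB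
    have hc1 := (Finset.mem_filter.mp hYA).2.2
    have hc2 := (Finset.mem_filter.mp hYB).2
    omega
  have hYsA : Ystar K ∉ A := fun hc => Ystar_not_mem hℓ (Finset.mem_filter.mp hc).2.1
  have hYsB : Ystar K ∉ B := fun hc => by
    have h := (Finset.mem_filter.mp hc).2
    rw [clZ_Ystar] at h
    omega
  have hGcard : G.card = NKl K ℓ + 1 := by
    rw [hG, Finset.card_union_of_disjoint
        (by simp [Finset.disjoint_singleton_right, hYsA, hYsB]),
      Finset.card_union_of_disjoint hAB, Finset.card_singleton, hNKl]
  have hGsub : ∀ g ∈ G, g ⊆ Finset.Icc 1 (ℓ:ℤ) := by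
    intro g hg
    rw [hG] at hg
    rcases Finset.mem_union.mp hg with hg | hg
    · rcases Finset.mem_union.mp hg with hg | hg
      · exact Finset.mem_powerset.mp (Finset.mem_filter.mp hg).1
      · exact Finset.mem_powerset.mp (Finset.mem_filter.mp hg).1
    · rw [Finset.mem_singleton.mp hg]; exact hsub
  set P : Finset (Cfg ℓ) := Finset.univ.filter (fun Y => Y.1 ∈ G) with hP
  have hPcard : P.card = NKl K ℓ + 1 := by
    rw [← hGcard]
    apply Finset.card_bij (fun (Y : Cfg ℓ) _ => Y.1)
    · intro Y hY; exact (Finset.mem_filter.mp hY).2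
    · intro Y hY Y' hY' h; exact Subtype.ext h
    · intro g hg; exact ⟨⟨g, hGsub g hg⟩, Finset.mem_filter.mpr ⟨Finset.mem_univ _, hg⟩, rfl⟩
  set Ys : Cfg ℓ := ⟨Ystar K, hsub⟩ with hYs
  have hYsP : Ys ∈ P := Finset.mem_filter.mpr ⟨Finset.mem_univ _, by
    rw [hG]; exact Finset.mem_union_right _ (Finset.mem_singleton_self _)⟩
  set P' := P.erase Ys with hP'
  have hP'card : P'.card = NKl K ℓ := by
    rw [hP', Finset.card_erase_of_mem hYsP, hPcard]
    omega
  set e := P'.equivFin with he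
  set idx : Cfg ℓ → ℕ := fun Y => if h : Y ∈ P' then (e ⟨Y, h⟩ : Fin _).val + 1 else 0
    with hidx
  set zfun : Cfg ℓ → Finset ℤ := fun Y => Finset.Icc ((ℓ:ℤ)+1) ((ℓ:ℤ) + (idx Y : ℤ))
    with hzfun
  have hzempty : ∀ Y, idx Y = 0 → zfun Y = ∅ := by
    intro Y h
    simp only [hzfun, h]
    apply Finset.Icc_eq_empty
    push_cast
    omega
  have hidxle : ∀ Y, idx Y ≤ NKl K ℓ := by
    intro Y
    by_cases h : Y ∈ P'
    · have h2 := (e ⟨Y, h⟩).2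
      have h3 := hP'card
      simp only [hidx, dif_pos h]
      omega
    · simp only [hidx, dif_neg h]
      omega
  have hcard_z : ∀ Y, (zfun Y).card = idx Y := by
    intro Y
    simp only [hzfun, Int.card_Icc]
    omega
  have hz : ∀ Y ∈ P, zfun Y ⊆ Finset.Icc ((ℓ:ℤ)+1) (L:ℤ) := by
    intro Y _
    simp only [hzfun]
    apply Finset.Icc_subset_Icc le_rfl
    have h1 := hidxle Y
    have h2 := hL
    push_cast
    omega
  have hidxinj : ∀ Y ∈ P, ∀ Y' ∈ P, idx Y = idx Y' → Y = Y' := by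
    intro Y hY Y' hY' h
    by_cases h1 : Y ∈ P' <;> by_cases h2 : Y' ∈ P'
    · simp only [hidx, dif_pos h1, dif_pos h2] at h
      have h3 : e ⟨Y, h1⟩ = e ⟨Y', h2⟩ := Fin.ext (by omega)
      exact Subtype.ext_iff.mp (e.injective h3)
    · simp only [hidx, dif_pos h1, dif_neg h2] at h
      omega
    · simp only [hidx, dif_neg h1, dif_pos h2] at h
      omega
    · have e1 : Y = Ys := by
        by_contra hn; exact h1 (Finset.mem_erase.mpr ⟨hn, hY⟩)
      have e2 : Y' = Ys := by
        by_contra hn; exact h2 (Finset.mem_erase.mpr ⟨hn, hY'⟩)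
      rw [e1, e2]
  have hinj : ∀ Y ∈ P, ∀ Y' ∈ P, zfun Y = zfun Y' → Y = Y' := by
    intro Y hY Y' hY' h
    apply hidxinj Y hY Y' hY'
    rw [← hcard_z, ← hcard_z, h]
  obtain ⟨ψ₀, hnorm, hsupp, hent⟩ :=
    main_aux ℓ L (le_of_lt h2) P ⟨Ys, hYsP⟩ zfun hz hinj
  refine ⟨ψ₀, hnorm, ?_, ?_⟩
  · intro X hX
    by_contra hc
    obtain ⟨Y, hY, hXY⟩ := hsupp X hc
    have hcl : clZ X.1 ≤ K := by
      rw [hXY]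
      by_cases hYP' : Y ∈ P'
      · have hj : 1 ≤ idx Y := by simp only [hidx, dif_pos hYP']; omega
        simp only [hzfun]
        rw [clZ_union ℓ Y.1 Y.2 (idx Y) hj]
        have hYG : Y.1 ∈ G := (Finset.mem_filter.mp hY).2
        have hYne : Y.1 ≠ Ystar K := by
          intro hcc
          exact (Finset.mem_erase.mp hYP').1 (Subtype.ext hcc)
        rw [hG] at hYG
        rcases Finset.mem_union.mp hYG with hg | hg
        · rcases Finset.mem_union.mp hg with hg | hg
          · obtain ⟨hmem, hclK⟩ := (Finset.mem_filter.mp hg).2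
            rw [if_pos hmem]
            omega
          · have hcly := (Finset.mem_filter.mp hg).2
            split <;> omega
        · exact absurd (Finset.mem_singleton.mp hg) hYne
      · have hYeq : Y = Ys := by
          by_contra hn; exact hYP' (Finset.mem_erase.mpr ⟨hn, hY⟩)
        have h0 : idx Y = 0 := by simp only [hidx, dif_neg hYP']
        rw [hzempty Y h0, Finset.union_empty, hYeq]
        show clZ (Ystar K) ≤ K
        rw [clZ_Ystar]
    omega
  · rw [hent, hPcard]
    push_cast
    ring_nf
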